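/- arXiv:2009.10552 — 5 statements merged into one kernel-verified Lean document; each statement's English description precedes it below -/
import Mathlib

section
/- Let z and x be real numbers with −1 ≤ z ≤ 1 and −1 ≤ x ≤ 1. Then max(−1−z−x, −1+z+x) ≤ min(1+z−x, 1−z+x), and consequently there exist nonnegative real numbers f₊₊, f₊₋, f₋₊, f₋₋ satisfying f₊₊ + f₊₋ = (1+z)/2, f₋₊ + f₋₋ = (1−z)/2, f₊₊ + f₋₊ = (1+x)/2, f₊₋ + f₋₋ = (1−x)/2. -/
/-- For −1 ≤ z ≤ 1 and −1 ≤ x ≤ 1 the lower bounds do not exceed the upper bounds, and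
hence Feynman's two-test observation space has a nonnegative grounding. -/
theorem feynman_two_test_nonneg_exists (z x : ℝ)
    (hz1 : -1 ≤ z) (hz2 : z ≤ 1) (hx1 : -1 ≤ x) (hx2 : x ≤ 1) :
    max (-1 - z - x) (-1 + z + x) ≤ min (1 + z - x) (1 - z + x) ∧
    ∃ fpp fpm fmp fmm : ℝ, 0 ≤ fpp ∧ 0 ≤ fpm ∧ 0 ≤ fmp ∧ 0 ≤ fmm ∧
      fpp + fpm = (1 + z) / 2 ∧ fmp + fmm = (1 - z) / 2 ∧
      fpp + fmp = (1 + x) / 2 ∧ fpm + fmm = (1 - x) / 2 := by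
  constructor
  · simp only [max_le_iff, le_min_iff]
    constructor <;> constructor <;> linarith
  · refine ⟨min ((1 + z) / 2) ((1 + x) / 2),
      (1 + z) / 2 - min ((1 + z) / 2) ((1 + x) / 2),
      (1 + x) / 2 - min ((1 + z) / 2) ((1 + x) / 2),
      (1 - x) / 2 - ((1 + z) / 2 - min ((1 + z) / 2) ((1 + x) / 2)), ?_, ?_, ?_, ?_, by ring, ?_, by ring, by ring⟩
    · exact le_min (by linarith) (by linarith)
    · have := min_le_left ((1 + z) / 2) ((1 + x) / 2); linarith
    · have := min_le_right ((1 + z) / 2) ((1 + x) / 2); linarith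
    · rcases le_total ((1 + z) / 2) ((1 + x) / 2) with h | h
      · rw [min_eq_left h]; linarith
      · rw [min_eq_right h]; linarith
    · ring
end

section
/- Real numbers P₀,…,P₇ satisfy the twelve Schneider constraints if and only if there exists a real number t such that P₀ = t, P₁ = 1/4 − t, P₂ = 1/4 − √2/8 − t, P₃ = √2/8 + t, P₄ = 1/4 + √2/8 − t, P₅ = −√2/8 + t, P₆ = t, P₇ = 1/4 − t. Moreover, for every such solution P₂ + P₅ = 1/4 − √2/4 < 0, so no solution has all of P₀,…,P₇ nonnegative. -/
/-- Schneider's observation space: the groundings form a one-parameter family, and no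
grounding is nonnegative since P₂ + P₅ = 1/4 − √2/4 < 0 always. -/
theorem schneider_groundings (P0 P1 P2 P3 P4 P5 P6 P7 : ℝ) :
    ((P0 + P1 = 1/4 ∧ P2 + P3 = 1/4 ∧ P4 + P5 = 1/4 ∧ P6 + P7 = 1/4 ∧
      P0 + P4 = 1/4 + Real.sqrt 2 / 8 ∧ P1 + P5 = 1/4 - Real.sqrt 2 / 8 ∧
      P2 + P6 = 1/4 - Real.sqrt 2 / 8 ∧ P3 + P7 = 1/4 + Real.sqrt 2 / 8 ∧
      P0 + P2 = 1/4 - Real.sqrt 2 / 8 ∧ P1 + P3 = 1/4 + Real.sqrt 2 / 8 ∧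
      P4 + P6 = 1/4 + Real.sqrt 2 / 8 ∧ P5 + P7 = 1/4 - Real.sqrt 2 / 8) ↔
     (∃ t : ℝ, P0 = t ∧ P1 = 1/4 - t ∧ P2 = 1/4 - Real.sqrt 2 / 8 - t ∧
               P3 = Real.sqrt 2 / 8 + t ∧ P4 = 1/4 + Real.sqrt 2 / 8 - t ∧
               P5 = -(Real.sqrt 2 / 8) + t ∧ P6 = t ∧ P7 = 1/4 - t)) ∧
    ((P0 + P1 = 1/4 ∧ P2 + P3 = 1/4 ∧ P4 + P5 = 1/4 ∧ P6 + P7 = 1/4 ∧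
      P0 + P4 = 1/4 + Real.sqrt 2 / 8 ∧ P1 + P5 = 1/4 - Real.sqrt 2 / 8 ∧
      P2 + P6 = 1/4 - Real.sqrt 2 / 8 ∧ P3 + P7 = 1/4 + Real.sqrt 2 / 8 ∧
      P0 + P2 = 1/4 - Real.sqrt 2 / 8 ∧ P1 + P3 = 1/4 + Real.sqrt 2 / 8 ∧
      P4 + P6 = 1/4 + Real.sqrt 2 / 8 ∧ P5 + P7 = 1/4 - Real.sqrt 2 / 8) →
     (P2 + P5 = 1/4 - Real.sqrt 2 / 4 ∧ P2 + P5 < 0 ∧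
      ¬ (0 ≤ P0 ∧ 0 ≤ P1 ∧ 0 ≤ P2 ∧ 0 ≤ P3 ∧ 0 ≤ P4 ∧ 0 ≤ P5 ∧ 0 ≤ P6 ∧ 0 ≤ P7))) := by
  have hs : (1:ℝ) < Real.sqrt 2 := by
    nlinarith [Real.sq_sqrt (by norm_num : (2:ℝ) ≥ 0), Real.sqrt_nonneg 2]
  constructor
  · constructor
    · rintro ⟨h1, h2, h3, h4, h5, h6, h7, h8, h9, h10, h11, h12⟩
      exact ⟨P0, by constructor <;> try rfl
                    refine ⟨by linarith, by linarith, by linarith, by linarith,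
                            by linarith, by linarith, by linarith⟩⟩
    · rintro ⟨t, rfl, rfl, rfl, rfl, rfl, rfl, rfl, rfl⟩
      refine ⟨by ring, by ring, by ring, by ring, by ring, by ring,
              by ring, by ring, by ring, by ring, by ring, by ring⟩
  · rintro ⟨h1, h2, h3, h4, h5, h6, h7, h8, h9, h10, h11, h12⟩
    have key : P2 + P5 = 1/4 - Real.sqrt 2 / 4 := by linarith
    have neg : P2 + P5 < 0 := by rw [key]; linarith
    exact ⟨key, neg, fun ⟨_, _, hP2, _, _, hP5, _, _⟩ => by linarith⟩
end

section
/- Real numbers v₀,…,v₁₅ satisfy all sixteen Hardy equations together with the symmetry constraints v₁ = v₄, v₂ = v₈, v₃ = v₁₂, v₆ = v₉, v₇ = v₁₃, v₁₁ = v₁₄ if and only if there exist real numbers a, b, c, d such that (v₀, v₁, v₂, v₃, v₅, v₆, v₇, v₁₀, v₁₁, v₁₅) = (−3, −1, 2, 0, 9, 2, 0, 0, 0, 0) + a·(2, −1, −1, 1, 0, 0, 0, 0, 0, 0) + b·(0, 1, 0, 0, −2, −1, 1, 0, 0, 0) + c·(0, 0, 1, 0, 0, −1, 0, −2, 1, 0)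 + d·(−1, 1, 1, 0, −1, −1, 0, −1, 0, 1), with v₄, v₈, v₁₂, v₉, v₁₃, v₁₄ determined by the symmetry constraints. -/
/-- The symmetric groundings of Hardy's observation space form a four-parameter family. -/
theorem hardy_symmetric_groundings
    (v0 v1 v2 v3 v4 v5 v6 v7 v8 v9 v10 v11 v12 v13 v14 v15 : ℝ) :
    (v0 + v1 + v4 + v5 = 4 ∧
     v2 + v3 + v6 + v7 = 4 ∧
     v8 + v9 + v12 + v13 = 4 ∧
     v10 + v11 + v14 + v15 = 0 ∧
     v0 + v2 + v4 + v6 = 0 ∧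
     v1 + v3 + v5 + v7 = 8 ∧
     v8 + v10 + v12 + v14 = 2 ∧
     v9 + v11 + v13 + v15 = 2 ∧
     v0 + v1 + v8 + v9 = 0 ∧
     v2 + v3 + v10 + v11 = 2 ∧
     v4 + v5 + v12 + v13 = 8 ∧
     v6 + v7 + v14 + v15 = 2 ∧
     v0 + v2 + v8 + v10 = 1 ∧
     v1 + v3 + v9 + v11 = 1 ∧
     v4 + v6 + v12 + v14 = 1 ∧
     v5 + v7 + v13 + v15 = 9 ∧
     v1 = v4 ∧ v2 = v8 ∧ v3 = v12 ∧ v6 = v9 ∧ v7 = v13 ∧ v11 = v14) ↔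
    (∃ a b c d : ℝ,
      v0 = -3 + a * 2 + b * 0 + c * 0 + d * (-1) ∧
      v1 = -1 + a * (-1) + b * 1 + c * 0 + d * 1 ∧
      v2 = 2 + a * (-1) + b * 0 + c * 1 + d * 1 ∧
      v3 = 0 + a * 1 + b * 0 + c * 0 + d * 0 ∧
      v5 = 9 + a * 0 + b * (-2) + c * 0 + d * (-1) ∧
      v6 = 2 + a * 0 + b * (-1) + c * (-1) + d * (-1) ∧
      v7 = 0 + a * 0 + b * 1 + c * 0 + d * 0 ∧
      v10 = 0 + a * 0 + b * 0 + c * (-2) + d * (-1) ∧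
      v11 = 0 + a * 0 + b * 0 + c * 1 + d * 0 ∧
      v15 = 0 + a * 0 + b * 0 + c * 0 + d * 1 ∧
      v4 = v1 ∧ v8 = v2 ∧ v12 = v3 ∧ v9 = v6 ∧ v13 = v7 ∧ v14 = v11) := by
  constructor
  · rintro ⟨h1,h2,h3,h4,h5,h6,h7,h8,h9,h10,h11,h12,h13,h14,h15,h16,s1,s2,s3,s4,s5,s6⟩
    exact ⟨v3, v7, v11, v15, by linarith, by linarith, by linarith, by linarith,
      by linarith, by linarith, by linarith, by linarith, by linarith, by linarith,
      by linarith, by linarith, by linarith, by linarith, by linarith, by linarith⟩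
  · rintro ⟨a,b,c,d,e0,e1,e2,e3,e5,e6,e7,e10,e11,e15,s1,s2,s3,s4,s5,s6⟩
    refine ⟨by linarith, by linarith, by linarith, by linarith, by linarith, by linarith,
      by linarith, by linarith, by linarith, by linarith, by linarith, by linarith,
      by linarith, by linarith, by linarith, by linarith,
      s1.symm, s2.symm, s3.symm, s4.symm, s5.symm, s6.symm⟩
end

section
/- Let n be an odd natural number and let B₁,…,Bₙ be finite sets (subsets of some type) such that every element of the union B₁ ∪ … ∪ Bₙ belongs to exactly two of the sets B₁,…,Bₙ. Then there is no finite set T such that T ∩ Bᵢ has exactly one element for every i = 1,…,n. (This is the combinatorial core of the theorem that no observation frame rigidly interprets the nine Cabello operators over ℂ⁴: the 18 Cabello vectors form 9 orthonormal bases of ℂ⁴ in which each vector occurs in exactly two bases, and a rigid interpretation would yield a set selecting exactly one vector from each basis, so 9 would have to equal twice the number of selected vectors, which is impossible.) -/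
open Finset in
/-- Combinatorial core of the Kochen–Specker / Cabello argument: if an odd number of
finite sets is such that each element of their union belongs to exactly two of them,
then no set meets every one of them in exactly one element. -/
theorem no_transversal_of_odd_double_cover {α : Type*} [DecidableEq α] {n : ℕ}
    (hn : Odd n) (B : Fin n → Finset α)
    (hcover : ∀ x : α, (∃ i, x ∈ B i) →
      (Finset.univ.filter (fun i : Fin n => x ∈ B i)).card = 2) :
    ¬ ∃ T : Finset α, ∀ i : Fin n, (T ∩ B i).card = 1 := by
  rintro ⟨T, hT⟩
  have key : ∑ i : Fin n, (T ∩ B i).card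
      = ∑ x ∈ T, (Finset.univ.filter (fun i : Fin n => x ∈ B i)).card := by
    calc ∑ i : Fin n, (T ∩ B i).card
        = ∑ i : Fin n, ∑ x ∈ T, if x ∈ B i then 1 else 0 := by
          refine Finset.sum_congr rfl fun i _ => ?_
          rw [← Finset.filter_mem_eq_inter, Finset.card_filter]
      _ = ∑ x ∈ T, ∑ i : Fin n, if x ∈ B i then 1 else 0 := Finset.sum_comm
      _ = ∑ x ∈ T, (Finset.univ.filter (fun i : Fin n => x ∈ B i)).card := by
          refine Finset.sum_congr rfl fun x _ => ?_
          rw [Finset.card_filter]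
  have hodd : Odd (∑ i : Fin n, (T ∩ B i).card) := by
    simp only [hT, Finset.sum_const, smul_eq_mul, mul_one, Finset.card_univ,
      Fintype.card_fin]
    exact hn
  rw [key] at hodd
  have heven : Even (∑ x ∈ T, (Finset.univ.filter (fun i : Fin n => x ∈ B i)).card) := by
    apply Finset.even_sum
    intro x hx
    rcases Nat.eq_zero_or_pos ((Finset.univ.filter (fun i : Fin n => x ∈ B i)).card) with h | h
    · simp [h]
    · obtain ⟨i, hi⟩ := Finset.card_pos.mp h
      simp only [Finset.mem_filter] at hi
      rw [hcover x ⟨i, hi.2⟩]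
      exact ⟨1, rfl⟩
  exact (Nat.not_even_iff_odd.mpr hodd) heven
end

section
/- Let (a,b) and (a′,b′) be pairs of real numbers, each with at least one nonzero entry, and let E, E′ ⊆ ℝ. Suppose the sets e = {(x,p) ∈ ℝ² : ax + bp ∈ E} and e′ = {(x,p) ∈ ℝ² : a′x + b′p ∈ E′} are equal and nonempty. Then either e = ℝ², or there exists a nonzero real number r such that a′ = ra, b′ = rb, and E′ = {rc : c ∈ E}. -/
/-!
If the functionals `L = a x + b p` and `L' = a' x + b' p` are linearly independent, then
`(L, L') : ℝ² → ℝ²` is onto, so any point can be moved to one with the `L`-value of a given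
point of `e` and an arbitrary `L'`-value; `e = L⁻¹ E = L'⁻¹ E'` is then all of `ℝ²`.
Otherwise `L = 0` or `L' = r L`; a constant functional (`L = 0` or `r = 0`) again forces
`e = ℝ²`. For `r ≠ 0`, pulling back along the surjection `L` turns `L⁻¹ E = L⁻¹ (r⁻¹ E')` into `E = r⁻¹ E'`.
-/

open Set Function

section Preimage

variable {α β γ : Type*}

theorem preimage_eq_univ_of_forall_eq {f : α → β} {c : β} {s : Set β} (hf : ∀ x, f x = c)
    (hne : (f ⁻¹' s).Nonempty) : f ⁻¹' s = univ := by
  obtain ⟨x₀, hx₀⟩ := hne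
  exact eq_univ_of_forall fun x => by simpa only [mem_preimage, hf] using hx₀

theorem preimage_eq_univ_of_surjective_pair {f : α → β} {g : α → γ} {s : Set β} {t : Set γ}
    (hfg : Surjective fun x => (f x, g x)) (heq : f ⁻¹' s = g ⁻¹' t)
    (hne : (f ⁻¹' s).Nonempty) : f ⁻¹' s = univ := by
  obtain ⟨x₀, hx₀⟩ := hne
  refine eq_univ_of_forall fun x => ?_
  obtain ⟨y, hy⟩ := hfg (f x₀, g x)
  simp only [Prod.mk.injEq] at hy
  have hys : f y ∈ s := hy.1 ▸ hx₀
  have hyt : g y ∈ t := show y ∈ g ⁻¹' t from heq ▸ hys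
  rw [heq]
  exact show g x ∈ t from hy.2 ▸ hyt

theorem image_eq_of_preimage_eq_preimage_comp {f : α → β} {h : β → γ} {s : Set β} {t : Set γ}
    (hf : Surjective f) (hh : Surjective h) (heq : f ⁻¹' s = (h ∘ f) ⁻¹' t) : t = h '' s := by
  rw [preimage_comp] at heq
  rw [preimage_injective.mpr hf heq, image_preimage_eq t hh]

end Preimage

def phaseFunctional (a b : ℝ) (q : ℝ × ℝ) : ℝ := a * q.1 + b * q.2

namespace phaseFunctional

theorem surjective {a b : ℝ} (hab : a ≠ 0 ∨ b ≠ 0) : Surjective (phaseFunctional a b) := by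
  intro c
  rcases hab with ha | hb
  · exact ⟨(c / a, 0), by simp [phaseFunctional, mul_div_cancel₀ c ha]⟩
  · exact ⟨(0, c / b), by simp [phaseFunctional, mul_div_cancel₀ c hb]⟩

theorem surjective_pair {a b a' b' : ℝ} (hdet : a * b' - a' * b ≠ 0) :
    Surjective fun q => (phaseFunctional a b q, phaseFunctional a' b' q) := by
  rintro ⟨c, c'⟩
  refine ⟨((b' * c - b * c') / (a * b' - a' * b), (a * c' - a' * c) / (a * b' - a' * b)), ?_⟩
  simp only [phaseFunctional, Prod.mk.injEq]
  constructor <;>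
    rw [← mul_div_assoc, ← mul_div_assoc, ← add_div, div_eq_iff hdet] <;> ring

theorem zero_zero_apply (q : ℝ × ℝ) : phaseFunctional 0 0 q = 0 := by
  simp [phaseFunctional]

theorem mul_mul_eq_comp (r a b : ℝ) :
    phaseFunctional (r * a) (r * b) = (fun c => r * c) ∘ phaseFunctional a b := by
  ext q
  simp only [phaseFunctional, comp_apply]
  ring

end phaseFunctional

theorem exists_eq_mul_of_mul_sub_mul_eq_zero {a b a' b' : ℝ} (hab : a ≠ 0 ∨ b ≠ 0)
    (hdet : a * b' - a' * b = 0) : ∃ r : ℝ, a' = r * a ∧ b' = r * b := by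
  rcases hab with ha | hb
  · refine ⟨a' / a, by field_simp, ?_⟩
    field_simp
    linarith
  · refine ⟨b' / b, ?_, by field_simp⟩
    field_simp
    linarith

theorem phase_space_consistency_general (a b a' b' : ℝ) (E E' : Set ℝ)
    (heq : {q : ℝ × ℝ | a * q.1 + b * q.2 ∈ E} = {q : ℝ × ℝ | a' * q.1 + b' * q.2 ∈ E'})
    (hne : {q : ℝ × ℝ | a * q.1 + b * q.2 ∈ E}.Nonempty) :
    {q : ℝ × ℝ | a * q.1 + b * q.2 ∈ E} = Set.univ ∨
    ∃ r : ℝ, r ≠ 0 ∧ a' = r * a ∧ b' = r * b ∧ E' = (fun c : ℝ => r * c) '' E := by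
  change phaseFunctional a b ⁻¹' E = phaseFunctional a' b' ⁻¹' E' at heq
  change (phaseFunctional a b ⁻¹' E).Nonempty at hne
  change phaseFunctional a b ⁻¹' E = univ ∨ _
  refine or_iff_not_imp_left.mpr fun hnuniv => ?_
  have hdet : a * b' - a' * b = 0 := by
    by_contra hdet
    exact hnuniv (preimage_eq_univ_of_surjective_pair (phaseFunctional.surjective_pair hdet) heq hne)
  have hab : a ≠ 0 ∨ b ≠ 0 := by
    by_contra! hab
    obtain ⟨rfl, rfl⟩ := hab
    exact hnuniv (preimage_eq_univ_of_forall_eq phaseFunctional.zero_zero_apply hne)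
  obtain ⟨r, rfl, rfl⟩ := exists_eq_mul_of_mul_sub_mul_eq_zero hab hdet
  have hr : r ≠ 0 := by
    rintro rfl
    simp only [zero_mul] at heq
    rw [heq] at hne hnuniv
    exact hnuniv (preimage_eq_univ_of_forall_eq phaseFunctional.zero_zero_apply hne)
  rw [phaseFunctional.mul_mul_eq_comp] at heq
  exact ⟨r, hr, rfl, rfl, image_eq_of_preimage_eq_preimage_comp (phaseFunctional.surjective hab)
    (mul_left_surjective₀ hr) heq⟩

/-- Consistency claim for the phase-space observation space: if two events
[ax+bp ∈ E] and [a′x+b′p ∈ E′] coincide and are nonempty, then either they are all of ℝ²,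
or (a′,b′) = r·(a,b) and E′ = r·E for some nonzero real r. -/
theorem phase_space_consistency (a b a' b' : ℝ)
    (hab : a ≠ 0 ∨ b ≠ 0) (hab' : a' ≠ 0 ∨ b' ≠ 0) (E E' : Set ℝ)
    (heq : {q : ℝ × ℝ | a * q.1 + b * q.2 ∈ E} = {q : ℝ × ℝ | a' * q.1 + b' * q.2 ∈ E'})
    (hne : {q : ℝ × ℝ | a * q.1 + b * q.2 ∈ E}.Nonempty) :
    {q : ℝ × ℝ | a * q.1 + b * q.2 ∈ E} = Set.univ ∨
    ∃ r : ℝ, r ≠ 0 ∧ a' = r * a ∧ b' = r * b ∧ E' = (fun c : ℝ => r * c) '' E :=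
  phase_space_consistency_general a b a' b' E E' heq hne
end
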